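/- arXiv:math/0301239 — 4 statements merged into one kernel-verified Lean document; each statement's English description precedes it below -/
import Mathlib

section
/- Let n ≥ 3, s > 0, and p ∈ R^n \ {0}, and set y = ((2-n)s/|p|²)·p. Let ξ be a C¹ function defined near y with ξ(y) = s and ∇ξ(y) = p. Fix λ > 0 and let ψ(x) = λ²x/|x|² be the inversion. Then the Kelvin transform ξ_ψ(x) := (λ/|x|)^{n-2} ξ(λ²x/|x|²) satisfies ∇ξ_ψ(ψ^{-1}(y)) = 0. -/
/-!
The derivative of the inversion `ψ = inversion 0 R` at `x ≠ 0` is `(R / ‖x‖) ^ 2` times the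
reflection `ρ` in `x⊥`, so the Kelvin transform `ξ_ψ x = (R / ‖x‖) ^ k * ξ (ψ x)` has gradient
`(R / ‖x‖) ^ k • ((R / ‖x‖) ^ 2 • ρ (∇ξ (ψ x)) - (k * ξ (ψ x) / ‖x‖ ^ 2) • x)`.
For `z = ψ⁻¹ y = -(λ ^ 2 / ((n - 2) * s)) • p` the vector `p = ∇ξ y` is parallel to `z`, so `ρ p = -p`
and the bracket is `-‖z‖⁻² • (λ ^ 2 • p + ((n - 2) * s) • z) = 0`.
-/

open Metric

open EuclideanGeometry InnerProductSpace
open scoped RealInnerProductSpace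

theorem hasDerivAt_div_pow (R : ℝ) (k : ℕ) {t : ℝ} (ht : t ≠ 0) :
    HasDerivAt (fun t : ℝ => (R / t) ^ k) (-(k * (R / t) ^ k / t)) t := by
  have h := ((hasDerivAt_inv ht).const_mul R).pow k
  simp only [← div_eq_mul_inv] at h
  refine h.congr_deriv ?_
  rcases k with _ | m
  · simp
  · simp only [Nat.add_sub_cancel, pow_succ]
    field_simp

section

variable {E : Type*} [NormedAddCommGroup E] [InnerProductSpace ℝ E]

theorem inversion_zero_apply (R : ℝ) (x : E) : inversion 0 R x = (R ^ 2 / ‖x‖ ^ 2) • x := by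
  simp [inversion, div_pow]

theorem Submodule.inner_reflection_left (K : Submodule ℝ E) [K.HasOrthogonalProjection]
    (u v : E) : ⟪K.reflection u, v⟫ = ⟪u, K.reflection v⟫ := by
  rw [← K.reflection.inner_map_map, Submodule.reflection_reflection]

/-- With `k = n - 2` on `ℝⁿ` this is the Kelvin transform `ξ_ψ` for `ψ = inversion 0 R`. -/
noncomputable def kelvinTransform (R : ℝ) (k : ℕ) (ξ : E → ℝ) (x : E) : ℝ :=
  (R / ‖x‖) ^ k * ξ (inversion 0 R x)

variable [CompleteSpace E]

theorem HasGradientAt.mul {f g : E → ℝ} {f' g' x : E} (hf : HasGradientAt f f' x)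
    (hg : HasGradientAt g g' x) : HasGradientAt (fun y => f y * g y) (f x • g' + g x • f') x := by
  rw [hasGradientAt_iff_hasFDerivAt, map_add, map_smul, map_smul]
  exact hf.hasFDerivAt.mul hg.hasFDerivAt

theorem HasDerivAt.comp_hasGradientAt {h : ℝ → ℝ} {h' : ℝ} {f : E → ℝ} {f' x : E}
    (hh : HasDerivAt h h' (f x)) (hf : HasGradientAt f f' x) :
    HasGradientAt (h ∘ f) (h' • f') x := by
  rw [hasGradientAt_iff_hasFDerivAt, map_smul]
  exact hh.comp_hasFDerivAt x hf.hasFDerivAt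

theorem hasGradientAt_norm_sq (x : E) : HasGradientAt (fun y : E => ‖y‖ ^ 2) ((2 : ℝ) • x) x :=
  (hasStrictFDerivAt_norm_sq x).hasFDerivAt.congr_fderiv <| by
    ext v; simp [two_mul]

theorem hasGradientAt_norm {x : E} (hx : x ≠ 0) : HasGradientAt (‖·‖) (‖x‖⁻¹ • x) x := by
  have h := (Real.hasDerivAt_sqrt (by positivity)).comp_hasGradientAt (hasGradientAt_norm_sq x)
  simp only [Function.comp_def, Real.sqrt_sq (norm_nonneg _), smul_smul] at h
  convert h using 2
  field_simp

theorem hasGradientAt_div_norm_pow (R : ℝ) (k : ℕ) {x : E} (hx : x ≠ 0) :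
    HasGradientAt (fun y : E => (R / ‖y‖) ^ k) (-(k * (R / ‖x‖) ^ k / ‖x‖ ^ 2) • x) x := by
  have h := (hasDerivAt_div_pow R k (norm_ne_zero_iff.mpr hx)).comp_hasGradientAt
    (hasGradientAt_norm hx)
  rw [smul_smul] at h
  convert h using 1
  congr 1
  field_simp

/-- The derivative of the inversion is `(R / ‖x‖) ^ 2` times a reflection, which is
self-adjoint. -/
theorem HasGradientAt.comp_inversion {ξ : E → ℝ} {g : E} {R : ℝ} {x : E}
    (hξ : HasGradientAt ξ g (inversion 0 R x)) (hx : x ≠ 0) :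
    HasGradientAt (fun y => ξ (inversion 0 R y)) ((R / ‖x‖) ^ 2 • (ℝ ∙ x)ᗮ.reflection g) x :=
  (hξ.hasFDerivAt.comp x (hasFDerivAt_inversion (c := (0 : E)) (R := R) hx)).congr_fderiv <| by
    ext v; simp [Submodule.inner_reflection_left]

theorem hasGradientAt_kelvinTransform {ξ : E → ℝ} {g : E} {R : ℝ} (k : ℕ) {x : E}
    (hξ : HasGradientAt ξ g (inversion 0 R x)) (hx : x ≠ 0) :
    HasGradientAt (kelvinTransform R k ξ) ((R / ‖x‖) ^ k •
      ((R / ‖x‖) ^ 2 • (ℝ ∙ x)ᗮ.reflection g - (k * ξ (inversion 0 R x) / ‖x‖ ^ 2) • x)) x := by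
  unfold kelvinTransform
  convert (hasGradientAt_div_norm_pow R k hx).mul (hξ.comp_inversion hx) using 1
  module

theorem hasGradientAt_kelvinTransform_eq_zero {ξ : E → ℝ} {g : E} {R : ℝ} (k : ℕ) {x : E}
    (hR : R ≠ 0) (hx : x ≠ 0) (hξ : HasGradientAt ξ g (inversion 0 R x))
    (hcrit : R ^ 2 • g + (k * ξ (inversion 0 R x)) • x = 0) :
    HasGradientAt (kelvinTransform R k ξ) 0 x := by
  set a := k * ξ (inversion 0 R x)
  have hg : g = -(a / R ^ 2) • x := by
    rw [add_eq_zero_iff_eq_neg] at hcrit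
    rw [← inv_smul_smul₀ (pow_ne_zero 2 hR) g, hcrit]
    module
  have hrefl : (ℝ ∙ x)ᗮ.reflection g = -g := by
    rw [hg, map_smul, Submodule.reflection_orthogonalComplement_singleton_eq_neg, smul_neg]
  have hsum : (R / ‖x‖) ^ 2 • -g - (a / ‖x‖ ^ 2) • x = -(‖x‖ ^ 2)⁻¹ • (R ^ 2 • g + a • x) := by
    rw [div_pow]
    module
  convert hasGradientAt_kelvinTransform k hξ hx using 1
  rw [hrefl, hsum, hcrit, smul_zero, smul_zero]

end

theorem stmt4 {n : ℕ} (hn : 3 ≤ n) {s : ℝ} (hs : 0 < s)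
    (p : EuclideanSpace ℝ (Fin n)) (hp : p ≠ 0)
    (y : EuclideanSpace ℝ (Fin n)) (hy : y = (((2 - (n : ℝ)) * s) / ‖p‖ ^ 2) • p)
    (ξ : EuclideanSpace ℝ (Fin n) → ℝ)
    (hξ : ContDiffAt ℝ 1 ξ y) (hξy : ξ y = s) (hξgrad : gradient ξ y = p)
    {lam : ℝ} (hlam : 0 < lam) :
    gradient (fun x => (lam / ‖x‖) ^ (n - 2) * ξ ((lam ^ 2 / ‖x‖ ^ 2) • x))
      ((lam ^ 2 / ‖y‖ ^ 2) • y) = 0 := by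
  have hn' : (2 - (n : ℝ)) ≠ 0 := sub_ne_zero.mpr (by norm_cast; omega)
  have hp' : ‖p‖ ≠ 0 := norm_ne_zero_iff.mpr hp
  have hy0 : y ≠ 0 := hy ▸ smul_ne_zero (div_ne_zero (mul_ne_zero hn' hs.ne') (by positivity)) hp
  set z := inversion 0 lam y with hz
  have hz0 : z ≠ 0 := (inversion_eq_center hlam.ne').not.mpr hy0
  have hzy : inversion 0 lam z = y := inversion_inversion 0 hlam.ne' y
  have hgrad : HasGradientAt ξ p (inversion 0 lam z) := by
    rw [hzy, ← hξgrad]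
    exact (hξ.differentiableAt one_ne_zero).hasGradientAt
  have hcrit : lam ^ 2 • p + ((n - 2 : ℕ) * ξ (inversion 0 lam z)) • z = 0 := by
    rw [hzy, hξy, hz, inversion_zero_apply, hy, norm_smul, Nat.cast_sub (by omega),
      Real.norm_eq_abs, mul_pow, sq_abs, smul_smul, smul_smul, ← add_smul]
    refine smul_eq_zero_of_left ?_ p
    field_simp
    ring
  have hK : (fun x => (lam / ‖x‖) ^ (n - 2) * ξ ((lam ^ 2 / ‖x‖ ^ 2) • x)) =
      kelvinTransform lam (n - 2) ξ := by
    funext x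
    rw [kelvinTransform, inversion_zero_apply]
  rw [hK, ← inversion_zero_apply]
  exact (hasGradientAt_kelvinTransform_eq_zero (n - 2) hlam.ne' hz0 hgrad hcrit).gradient
end

section
/- Let n ≥ 3, let u : R^n \ {0} → (0,∞) be continuous, and let μ > 0, e ∈ R^n with |e| = 1. Suppose that for every x ∈ R^n \ {0} and every 0 < λ < |x|, u_{x,λ}(y) ≤ u(y) for all y ≠ 0 with |y-x| ≥ λ. Then for every y in the half-space Σ_μ(e) = {y : y·e < μ} with y ≠ 0, one has u(y^{e,μ}) ≤ u(y), where y^{e,μ} is the reflection of y across the hyperplane {x : x·e = μ}. -/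
/-!
Reflection in the hyperplane `⟪·, e⟫ = μ` is the limit, as `R → ∞`, of the inversions in the
spheres of radius `R - μ` centred at `R • e`: these spheres all pass through `μ • e` and flatten
onto the hyperplane. Along the same family the Kelvin factor `((R - μ) / ‖y - R • e‖) ^ (n - 2)`
tends to `1`, so letting `R → ∞` in the hypothesis and using continuity of `u` at the reflected
point (which is nonzero because `μ > 0`) gives the claim.
-/

open Metric RealInnerProductSpace Filter Topology EuclideanGeometry

variable {E : Type*} [NormedAddCommGroup E] [InnerProductSpace ℝ E]

lemma inversion_eq_add_smul (x y : E) (lam : ℝ) :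
    inversion x lam y = x + (lam ^ 2 / ‖y - x‖ ^ 2) • (y - x) := by
  rw [inversion, dist_eq_norm, div_pow, vsub_eq_sub, vadd_eq_add, add_comm]

lemma sub_inner_le_norm_sub_smul {e : E} (he : ‖e‖ = 1) (y : E) (R : ℝ) :
    R - ⟪y, e⟫ ≤ ‖y - R • e‖ := by
  have h := real_inner_le_norm (R • e - y) e
  rwa [inner_sub_left, real_inner_smul_left, real_inner_self_eq_norm_sq, he, one_pow, mul_one,
    mul_one, norm_sub_rev] at h

lemma norm_sub_smul_sq {e : E} (he : ‖e‖ = 1) (y : E) (R : ℝ) :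
    ‖y - R • e‖ ^ 2 = R ^ 2 - 2 * ⟪y, e⟫ * R + ‖y‖ ^ 2 := by
  rw [norm_sub_sq_real, real_inner_smul_right, norm_smul, he, Real.norm_eq_abs, mul_one, sq_abs]
  ring

lemma norm_sub_smul_eq_mul (y e : E) {R : ℝ} (hR : 0 < R) :
    ‖y - R • e‖ = R * ‖R⁻¹ • y - e‖ := by
  calc ‖y - R • e‖ = ‖R • (R⁻¹ • y - e)‖ := by rw [smul_sub, smul_inv_smul₀ hR.ne']
    _ = R * ‖R⁻¹ • y - e‖ := by rw [norm_smul, Real.norm_of_nonneg hR.le]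

lemma tendsto_div_norm_sub_smul_atTop {e : E} (he : ‖e‖ = 1) (y : E) (μ : ℝ) :
    Tendsto (fun R => (R - μ) / ‖y - R • e‖) atTop (𝓝 1) := by
  set G : ℝ → ℝ := fun s => (1 - μ * s) / ‖s • y - e‖
  have hG : ContinuousAt G 0 :=
    ContinuousAt.div (by fun_prop) (by fun_prop) (by simp [he])
  have hG0 : G 0 = 1 := by simp [G, he]
  refine hG0 ▸ (hG.tendsto.comp tendsto_inv_atTop_zero).congr' ?_
  filter_upwards [eventually_gt_atTop 0] with R hR
  simp only [Function.comp, G, norm_sub_smul_eq_mul y e hR]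
  field_simp

lemma tendsto_inversion_atTop {e : E} (he : ‖e‖ = 1) (y : E) (μ : ℝ) :
    Tendsto (fun R => inversion (R • e) (R - μ) y) atTop
      (𝓝 (y + (2 * (μ - ⟪y, e⟫)) • e)) := by
  set t := ⟪y, e⟫
  set a := ‖y‖ ^ 2
  set Q : ℝ → ℝ := fun s => 1 - 2 * t * s + a * s ^ 2
  -- the inversion point written in terms of `s = R⁻¹`; it extends continuously to `s = 0`
  set F : ℝ → E := fun s =>
    ((1 - μ * s) ^ 2 / Q s) • y + ((2 * (μ - t) + (a - μ ^ 2) * s) / Q s) • e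
  have hF : ContinuousAt F 0 := by
    have hQ : Q 0 ≠ 0 := by simp [Q]
    refine ((continuousAt_const.sub ?_).pow 2 |>.div ?_ hQ).smul continuousAt_const |>.add
      ((ContinuousAt.div ?_ ?_ hQ).smul continuousAt_const) <;> fun_prop
  have hF0 : F 0 = y + (2 * (μ - t)) • e := by simp [F, Q]
  refine hF0 ▸ (hF.tendsto.comp tendsto_inv_atTop_zero).congr' ?_
  filter_upwards [eventually_gt_atTop (max 0 t)] with R hR
  have hR0 : 0 < R := (le_max_left _ _).trans_lt hR
  have hD : 0 < R ^ 2 - 2 * t * R + a := by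
    rw [← norm_sub_smul_sq he]
    exact pow_pos ((sub_pos.2 ((le_max_right _ _).trans_lt hR)).trans_le
      (sub_inner_le_norm_sub_smul he y R)) 2
  have hQ : Q R⁻¹ = (R ^ 2 - 2 * t * R + a) / R ^ 2 := by
    simp only [Q]; field_simp
  have hc : (1 - μ * R⁻¹) ^ 2 / Q R⁻¹ = (R - μ) ^ 2 / (R ^ 2 - 2 * t * R + a) := by
    rw [hQ]; field_simp
  have hd : (2 * (μ - t) + (a - μ ^ 2) * R⁻¹) / Q R⁻¹
      = R * (1 - (R - μ) ^ 2 / (R ^ 2 - 2 * t * R + a)) := by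
    rw [hQ, one_sub_div hD.ne']; field_simp; ring
  simp only [Function.comp, F, hc, hd, inversion_eq_add_smul, norm_sub_smul_sq he]
  module

lemma inner_reflection_eq {e : E} (he : ‖e‖ = 1) (y : E) (μ : ℝ) :
    ⟪y + (2 * (μ - ⟪y, e⟫)) • e, e⟫ = 2 * μ - ⟪y, e⟫ := by
  rw [inner_add_left, real_inner_smul_left, real_inner_self_eq_norm_sq, he]
  ring

theorem stmt6_general {n : ℕ} (u : EuclideanSpace ℝ (Fin n) → ℝ)
    (huc : ContinuousOn u {(0 : EuclideanSpace ℝ (Fin n))}ᶜ)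
    (hms : ∀ x : EuclideanSpace ℝ (Fin n), x ≠ 0 → ∀ lam : ℝ, 0 < lam → lam < ‖x‖ →
      ∀ y : EuclideanSpace ℝ (Fin n), y ≠ 0 → lam ≤ ‖y - x‖ →
        (lam / ‖y - x‖) ^ (n - 2) * u (x + (lam ^ 2 / ‖y - x‖ ^ 2) • (y - x)) ≤ u y)
    (μ : ℝ) (hμ : 0 < μ) (e : EuclideanSpace ℝ (Fin n)) (he : ‖e‖ = 1) :
    ∀ y : EuclideanSpace ℝ (Fin n), y ≠ 0 → ⟪y, e⟫ < μ →
      u (y + (2 * (μ - ⟪y, e⟫)) • e) ≤ u y := by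
  intro y hy hyμ
  have hz : y + (2 * (μ - ⟪y, e⟫)) • e ≠ 0 := by
    intro h
    have := inner_reflection_eq he y μ
    rw [h, inner_zero_left] at this
    linarith
  have hlim : Tendsto
      (fun R => ((R - μ) / ‖y - R • e‖) ^ (n - 2) * u (inversion (R • e) (R - μ) y))
      atTop (𝓝 (u (y + (2 * (μ - ⟪y, e⟫)) • e))) := by
    simpa using ((tendsto_div_norm_sub_smul_atTop he y μ).pow (n - 2)).mul
      ((huc.continuousAt (isOpen_compl_singleton.mem_nhds hz)).tendsto.comp
        (tendsto_inversion_atTop he y μ))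
  refine le_of_tendsto hlim ?_
  filter_upwards [eventually_gt_atTop μ] with R hR
  have hRe : ‖R • e‖ = R := by rw [norm_smul, he, mul_one, Real.norm_of_nonneg (by linarith)]
  rw [inversion_eq_add_smul]
  exact hms (R • e) (norm_pos_iff.1 (by linarith)) (R - μ) (by linarith) (by linarith) y hy
    (by linarith [sub_inner_le_norm_sub_smul he y R])

theorem stmt6 {n : ℕ} (hn : 3 ≤ n) (u : EuclideanSpace ℝ (Fin n) → ℝ)
    (huc : ContinuousOn u {(0 : EuclideanSpace ℝ (Fin n))}ᶜ)
    (hupos : ∀ x : EuclideanSpace ℝ (Fin n), x ≠ 0 → 0 < u x)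
    (hms : ∀ x : EuclideanSpace ℝ (Fin n), x ≠ 0 → ∀ lam : ℝ, 0 < lam → lam < ‖x‖ →
      ∀ y : EuclideanSpace ℝ (Fin n), y ≠ 0 → lam ≤ ‖y - x‖ →
        (lam / ‖y - x‖) ^ (n - 2) * u (x + (lam ^ 2 / ‖y - x‖ ^ 2) • (y - x)) ≤ u y)
    (μ : ℝ) (hμ : 0 < μ) (e : EuclideanSpace ℝ (Fin n)) (he : ‖e‖ = 1) :
    ∀ y : EuclideanSpace ℝ (Fin n), y ≠ 0 → ⟪y, e⟫ < μ →
      u (y + (2 * (μ - ⟪y, e⟫)) • e) ≤ u y :=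
  stmt6_general u huc hms μ hμ e he
end

section
/- Let n ≥ 3 and let u : R^n \ {0} → R be continuous. Suppose that for every unit vector e ∈ R^n and every μ > 0, u(y^{e,μ}) ≤ u(y) for all y ∈ Σ_μ(e) \ {0}, where Σ_μ(e) = {y : y·e < μ} and y^{e,μ} is the reflection of y across ∂Σ_μ(e). Then u is radially symmetric: u(x) = u(y) whenever |x| = |y| > 0. -/
/-!
Letting `μ → 0⁺` and using continuity away from the origin, `u` does not increase under the
reflection in any hyperplane through `0`, applied to points on the far side of it. Two points of
the same norm are exchanged by the reflection in their perpendicular bisector, which passes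
through `0`; using it in both directions gives `u x ≤ u y` and `u y ≤ u x`.
-/

open RealInnerProductSpace Submodule

variable {E : Type*} [NormedAddCommGroup E] [InnerProductSpace ℝ E]

/-- `y + (2 * (μ - ⟪y, e⟫)) • e` is the reflection `y^{e,μ}` of `y` in `{x | ⟪x, e⟫ = μ}`. -/
def ReflectionNonincreasing (u : E → ℝ) : Prop :=
  ∀ e : E, ‖e‖ = 1 → ∀ μ : ℝ, 0 < μ →
    ∀ y : E, y ≠ 0 → ⟪y, e⟫ < μ → u (y + (2 * (μ - ⟪y, e⟫)) • e) ≤ u y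

theorem reflection_orthogonal_singleton_apply_of_norm_eq_one {e : E} (he : ‖e‖ = 1) (z : E) :
    reflection (ℝ ∙ e)ᗮ z = z - (2 * ⟪z, e⟫) • e := by
  rw [reflection_orthogonal_apply, reflection_singleton_apply, he, real_inner_comm]
  simp only [RCLike.ofReal_one, one_pow, div_one, neg_sub, ← Nat.cast_smul_eq_nsmul ℝ, smul_smul,
    Nat.cast_ofNat]

namespace ReflectionNonincreasing

variable {u : E → ℝ}

theorem apply_reflection_le_of_norm_eq_one (hrefl : ReflectionNonincreasing u)
    (huc : ContinuousOn u {(0 : E)}ᶜ) {e : E} (he : ‖e‖ = 1) {z : E} (hz : z ≠ 0)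
    (hze : ⟪z, e⟫ ≤ 0) :
    u (reflection (ℝ ∙ e)ᗮ z) ≤ u z := by
  set g : ℝ → E := fun μ => z + (2 * (μ - ⟪z, e⟫)) • e
  have hg0 : g 0 = reflection (ℝ ∙ e)ᗮ z := by
    simp only [g, reflection_orthogonal_singleton_apply_of_norm_eq_one he, mul_neg, neg_smul,
      sub_eq_add_neg, zero_add]
  have hcont : ContinuousAt (u ∘ g) 0 := by
    refine ContinuousAt.comp ?_ (by fun_prop)
    refine huc.continuousAt (isOpen_compl_singleton.mem_nhds ?_)
    rw [hg0, Set.mem_compl_singleton_iff, EmbeddingLike.map_ne_zero_iff]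
    exact hz
  rw [← hg0]
  refine le_of_tendsto (hcont.tendsto.mono_left (nhdsWithin_le_nhds (s := Set.Ioi 0))) ?_
  filter_upwards [self_mem_nhdsWithin] with μ hμ
  exact hrefl e he μ hμ z hz (hze.trans_lt hμ)

theorem apply_reflection_le (hrefl : ReflectionNonincreasing u)
    (huc : ContinuousOn u {(0 : E)}ᶜ) (v : E) {z : E} (hz : z ≠ 0) (hzv : ⟪z, v⟫ ≤ 0) :
    u (reflection (ℝ ∙ v)ᗮ z) ≤ u z := by
  rcases eq_or_ne v 0 with rfl | hv
  · simp [reflection_mem_subspace_eq_self]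
  have hspan : ℝ ∙ (‖v‖⁻¹ • v) = ℝ ∙ v :=
    span_singleton_smul_eq (inv_ne_zero (norm_ne_zero_iff.mpr hv)).isUnit v
  have he : ‖‖v‖⁻¹ • v‖ = 1 := norm_smul_inv_norm (𝕜 := ℝ) hv
  have hze : ⟪z, ‖v‖⁻¹ • v⟫ ≤ 0 := by
    rw [real_inner_smul_right]
    exact mul_nonpos_of_nonneg_of_nonpos (by positivity) hzv
  simpa only [hspan] using hrefl.apply_reflection_le_of_norm_eq_one huc he hz hze

theorem le_of_norm_eq (hrefl : ReflectionNonincreasing u) (huc : ContinuousOn u {(0 : E)}ᶜ)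
    {x y : E} (hy : y ≠ 0) (hxy : ‖x‖ = ‖y‖) : u x ≤ u y := by
  have hyx : ⟪y, x - y⟫ ≤ 0 := by
    rw [inner_sub_right, real_inner_self_eq_norm_sq, real_inner_comm]
    nlinarith [hxy ▸ real_inner_le_norm x y]
  have hreflect : reflection (ℝ ∙ (x - y))ᗮ y = x := by
    have hspan : ℝ ∙ (x - y) = ℝ ∙ (y - x) := by
      rw [← neg_sub, ← Set.neg_singleton, span_neg]
    simpa only [hspan] using reflection_sub hxy.symm
  simpa only [hreflect] using hrefl.apply_reflection_le huc (x - y) hy hyx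

end ReflectionNonincreasing

theorem stmt7_general {n : ℕ} (u : EuclideanSpace ℝ (Fin n) → ℝ)
    (huc : ContinuousOn u {(0 : EuclideanSpace ℝ (Fin n))}ᶜ)
    (hrefl : ∀ e : EuclideanSpace ℝ (Fin n), ‖e‖ = 1 → ∀ μ : ℝ, 0 < μ →
      ∀ y : EuclideanSpace ℝ (Fin n), y ≠ 0 → ⟪y, e⟫ < μ →
        u (y + (2 * (μ - ⟪y, e⟫)) • e) ≤ u y) :
    ∀ x y : EuclideanSpace ℝ (Fin n), ‖x‖ = ‖y‖ → x ≠ 0 → u x = u y := by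
  intro x y hxy hx
  have hy : y ≠ 0 := by rwa [← norm_ne_zero_iff, ← hxy, norm_ne_zero_iff]
  exact le_antisymm (ReflectionNonincreasing.le_of_norm_eq hrefl huc hy hxy)
    (ReflectionNonincreasing.le_of_norm_eq hrefl huc hx hxy.symm)

theorem stmt7 {n : ℕ} (hn : 3 ≤ n) (u : EuclideanSpace ℝ (Fin n) → ℝ)
    (huc : ContinuousOn u {(0 : EuclideanSpace ℝ (Fin n))}ᶜ)
    (hrefl : ∀ e : EuclideanSpace ℝ (Fin n), ‖e‖ = 1 → ∀ μ : ℝ, 0 < μ →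
      ∀ y : EuclideanSpace ℝ (Fin n), y ≠ 0 → ⟪y, e⟫ < μ →
        u (y + (2 * (μ - ⟪y, e⟫)) • e) ≤ u y) :
    ∀ x y : EuclideanSpace ℝ (Fin n), ‖x‖ = ‖y‖ → x ≠ 0 → u x = u y :=
  stmt7_general u huc hrefl
end

section
/- Let n ≥ 3 and let w : R^n → R be a C¹ function such that for every x ∈ R^n and every λ > 0, w_{x,λ}(y) ≤ w(y) for all y with |y - x| ≥ λ, where w_{x,λ}(y) = (λ/|y-x|)^{n-2} w(x + λ²(y-x)/|y-x|²). Then w is constant. -/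
open Filter Set Topology

/-!
Fix `y` and `v ≠ 0`, and put `x = y - v`. For `0 < s < 1` the Kelvin transform about the sphere
of radius `s ‖v‖` centred at `x`, evaluated at `y`, is `s ^ (n - 2) * w (y - v + s ^ 2 • v)`. This is
bounded by `w y`, its value at `s = 1`, so its derivative at `s = 1` is nonnegative:
`(n - 2) w(y) + 2 Dw(y) v ≥ 0`. A linear functional bounded below off the origin vanishes, so
`Dw ≡ 0` and `w` is constant.
-/

theorem HasDerivAt.nonneg_of_eventually_le_nhdsLT {g : ℝ → ℝ} {D b : ℝ} (hg : HasDerivAt g D b)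
    (hle : ∀ᶠ t in 𝓝[<] b, g t ≤ g b) : 0 ≤ D := by
  have hslope : Tendsto (slope g b) (𝓝[<] b) (𝓝 D) :=
    hg.tendsto_slope.mono_left (nhdsWithin_mono b fun _ ht => ne_of_lt ht)
  refine ge_of_tendsto hslope ?_
  filter_upwards [hle, self_mem_nhdsWithin] with t hgt (htb : t < b)
  rw [slope_def_field]
  exact div_nonneg_of_nonpos (by linarith) (by linarith)

theorem nonneg_of_forall_pos_le_mul {a b : ℝ} (h : ∀ t : ℝ, 0 < t → a ≤ t * b) : 0 ≤ b := by
  by_contra! hb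
  have := h ((|a| + 1) / -b) (div_pos (by positivity) (neg_pos.mpr hb))
  rw [div_mul_eq_mul_div, div_neg, mul_div_cancel_right₀ _ hb.ne] at this
  linarith [neg_abs_le a]

theorem ContinuousLinearMap.eq_zero_of_forall_ne_zero_le_apply {E : Type*}
    [AddCommGroup E] [Module ℝ E] [TopologicalSpace E] {L : E →L[ℝ] ℝ} {a : ℝ}
    (h : ∀ v, v ≠ 0 → a ≤ L v) : L = 0 := by
  have hnonneg : ∀ v, v ≠ 0 → 0 ≤ L v := fun v hv =>
    nonneg_of_forall_pos_le_mul fun t ht => by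
      simpa using h (t • v) (smul_ne_zero ht.ne' hv)
  ext v
  rw [zero_apply]
  rcases eq_or_ne v 0 with rfl | hv
  · simp
  · have := hnonneg (-v) (neg_ne_zero.mpr hv)
    rw [map_neg] at this
    exact le_antisymm (by linarith) (hnonneg v hv)

theorem mul_add_two_mul_fderiv_nonneg_of_forall_pow_mul_le {E : Type*}
    [NormedAddCommGroup E] [NormedSpace ℝ E]
    {w : E → ℝ} {y v : E} (k : ℕ) (hw : DifferentiableAt ℝ w y)
    (h : ∀ s ∈ Ioo (0 : ℝ) 1, s ^ k * w (y - v + s ^ 2 • v) ≤ w y) :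
    0 ≤ k * w y + 2 * fderiv ℝ w y v := by
  have hcurve : HasDerivAt (fun s : ℝ => y - v + s ^ 2 • v) ((2 : ℝ) • v) 1 := by
    simpa using ((hasDerivAt_pow 2 (1 : ℝ)).smul_const v).const_add (y - v)
  have hw' : HasFDerivAt w (fderiv ℝ w y) (y - v + (1 : ℝ) ^ 2 • v) := by
    simpa using hw.hasFDerivAt
  have hg := (hasDerivAt_pow k (1 : ℝ)).mul (hw'.comp_hasDerivAt 1 hcurve)
  refine le_of_le_of_eq (hg.nonneg_of_eventually_le_nhdsLT ?_) ?_
  · filter_upwards [Ioo_mem_nhdsLT (zero_lt_one' ℝ)] with s hs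
    simpa using h s hs
  · simp [map_smul]

theorem stmt8_general {n : ℕ} (w : EuclideanSpace ℝ (Fin n) → ℝ)
    (hwC1 : ContDiff ℝ 1 w)
    (hms : ∀ x : EuclideanSpace ℝ (Fin n), ∀ lam : ℝ, 0 < lam →
      ∀ y : EuclideanSpace ℝ (Fin n), lam ≤ ‖y - x‖ →
        (lam / ‖y - x‖) ^ (n - 2) * w (x + (lam ^ 2 / ‖y - x‖ ^ 2) • (y - x)) ≤ w y) :
    ∃ c : ℝ, ∀ x, w x = c := by
  have hw : Differentiable ℝ w := hwC1.differentiable one_ne_zero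
  have hradial (y v : EuclideanSpace ℝ (Fin n)) (hv : v ≠ 0) :
      -((n - 2 : ℕ) * w y) / 2 ≤ fderiv ℝ w y v := by
    have hr : 0 < ‖v‖ := norm_pos_iff.mpr hv
    have := mul_add_two_mul_fderiv_nonneg_of_forall_pow_mul_le (n - 2) (hw y) fun s hs => by
      have h := hms (y - v) (s * ‖v‖) (mul_pos hs.1 hr) y
        (by simpa using mul_le_of_le_one_left hr.le hs.2.le)
      rwa [sub_sub_cancel, mul_div_cancel_right₀ _ hr.ne', mul_pow,
        mul_div_cancel_right₀ _ (pow_ne_zero 2 hr.ne')] at h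
    linarith
  have hzero (y) : fderiv ℝ w y = 0 :=
    ContinuousLinearMap.eq_zero_of_forall_ne_zero_le_apply (hradial y)
  exact ⟨w 0, fun x => is_const_of_fderiv_eq_zero hw hzero x 0⟩

theorem stmt8 {n : ℕ} (hn : 3 ≤ n) (w : EuclideanSpace ℝ (Fin n) → ℝ)
    (hwC1 : ContDiff ℝ 1 w)
    (hms : ∀ x : EuclideanSpace ℝ (Fin n), ∀ lam : ℝ, 0 < lam →
      ∀ y : EuclideanSpace ℝ (Fin n), lam ≤ ‖y - x‖ →
        (lam / ‖y - x‖) ^ (n - 2) * w (x + (lam ^ 2 / ‖y - x‖ ^ 2) • (y - x)) ≤ w y) :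
    ∃ c : ℝ, ∀ x, w x = c :=
  stmt8_general w hwC1 hms
end
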